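/- Define Φ : [0,1] → ℝ by Φ(x) = 4x² sin(π/(4x²)) for x ∈ (0,1/2], Φ(x) = −4(1−x)² sin(π/(4(1−x)²)) for x ∈ (1/2,1), and Φ(0) = Φ(1) = 0. For each k ∈ ℕ let I_k = [2^{−(k+1)}, 2^{−k}] and define Φ_{I_k} : [0,1] → ℝ by Φ_{I_k}(x) = Φ(2^{k+1}x − 1) for x ∈ I_k and Φ_{I_k}(x) = 0 otherwise. Suppose F : [0,1] → ℝ is a uniform limit of finite linear combinations of the functions Φ_{I_k}. Then there exists a real sequence (α_k) with α_k → 0 such that F(x) = Σ_k α_k Φ_{I_k}(x) for every x ∈ [0,1], F is continuous on [0,1], and F is differentiable at every point of (0,1]. -/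

import Mathlib

open Set Filter Topology

/-- `Φ(x) = 4x² sin(π/(4x²))` on `(0,1/2]`, `Φ(x) = −4(1−x)² sin(π/(4(1−x)²))` on
`(1/2,1)`, and `Φ = 0` at `0`, `1` (and outside `[0,1]`). -/
noncomputable def Phi (x : ℝ) : ℝ :=
  if x ≤ 0 then 0
  else if x ≤ 1 / 2 then 4 * x ^ 2 * Real.sin (Real.pi / (4 * x ^ 2))
  else if x < 1 then -(4 * (1 - x) ^ 2 * Real.sin (Real.pi / (4 * (1 - x) ^ 2)))
  else 0

/-- `Φ_{I_k}` where `I_k = [2^{-(k+1)}, 2^{-k}]`: it equals `Φ(2^{k+1}x − 1)` on `I_k`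
and `0` elsewhere. -/
noncomputable def gg (x : ℝ) : ℝ := 4 * x ^ 2 * Real.sin (Real.pi / (4 * x ^ 2))

noncomputable def Dg (x : ℝ) : ℝ :=
  8 * x * Real.sin (Real.pi / (4 * x ^ 2)) +
    4 * x ^ 2 * (Real.cos (Real.pi / (4 * x ^ 2)) * (-(Real.pi * (4 * (2 * x ^ 1))) / (4 * x ^ 2) ^ 2))

lemma hasDerivAt_gg {x : ℝ} (hx : x ≠ 0) : HasDerivAt gg (Dg x) x := by
  have hne : 4 * x ^ 2 ≠ 0 := by positivity
  have h1 : HasDerivAt (fun x : ℝ => 4 * x ^ 2) (4 * (2 * x ^ 1)) x :=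
    (hasDerivAt_pow 2 x).const_mul 4
  have h2 : HasDerivAt (fun x : ℝ => Real.pi / (4 * x ^ 2))
      ((0 * (4 * x ^ 2) - Real.pi * (4 * (2 * x ^ 1))) / (4 * x ^ 2) ^ 2) x :=
    (hasDerivAt_const x Real.pi).div h1 hne
  have h3 : HasDerivAt (fun x : ℝ => Real.sin (Real.pi / (4 * x ^ 2)))
      (Real.cos (Real.pi / (4 * x ^ 2)) * ((0 * (4 * x ^ 2) - Real.pi * (4 * (2 * x ^ 1))) / (4 * x ^ 2) ^ 2)) x :=
    (Real.hasDerivAt_sin _).comp x h2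
  have h4 := h1.mul h3
  refine h4.congr_deriv ?_
  unfold Dg
  ring_nf

lemma Dg_half : Dg (1 / 2) = 4 * Real.pi := by
  unfold Dg
  have : Real.pi / (4 * (1 / 2 : ℝ) ^ 2) = Real.pi := by norm_num
  rw [this, Real.sin_pi, Real.cos_pi]
  ring

lemma gg_half : gg (1/2) = 0 := by
  unfold gg
  have : Real.pi / (4 * (1 / 2 : ℝ) ^ 2) = Real.pi := by norm_num
  rw [this, Real.sin_pi]; ring

lemma Phi_nonpos {x : ℝ} (h : x ≤ 0) : Phi x = 0 := by simp [Phi, h]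

lemma Phi_left {x : ℝ} (h0 : 0 < x) (h1 : x ≤ 1/2) : Phi x = gg x := by
  unfold Phi gg; rw [if_neg (not_le.2 h0), if_pos h1]

lemma Phi_right {x : ℝ} (h0 : 1/2 < x) (h1 : x < 1) : Phi x = -gg (1 - x) := by
  have h : ¬ x ≤ 0 := by linarith
  unfold Phi gg; rw [if_neg h, if_neg (not_le.2 h0), if_pos h1]

lemma Phi_ge_one {x : ℝ} (h : 1 ≤ x) : Phi x = 0 := by
  have h0 : ¬ x ≤ 0 := by linarith
  have h1 : ¬ x ≤ 1/2 := by linarith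
  unfold Phi; rw [if_neg h0, if_neg h1, if_neg (not_lt.2 h)]

noncomputable def hh (x : ℝ) : ℝ := -gg (1 - x)

lemma hasDerivAt_hh {x : ℝ} (hx : x ≠ 1) : HasDerivAt hh (Dg (1 - x)) x := by
  have hc : HasDerivAt (fun x : ℝ => 1 - x) (0 - 1) x :=
    (hasDerivAt_const x 1).sub (hasDerivAt_id x)
  have h1x : (1 : ℝ) - x ≠ 0 := sub_ne_zero.2 (Ne.symm hx)
  have := ((hasDerivAt_gg h1x).comp x hc).neg
  exact this.congr_deriv (by ring)

lemma hasDerivAt_Phi_zero : HasDerivAt Phi 0 0 := by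
  rw [hasDerivAt_iff_tendsto_slope]
  apply squeeze_zero_norm' (a := fun y => 4 * |y|)
  · filter_upwards [self_mem_nhdsWithin,
      eventually_nhdsWithin_of_eventually_nhds
        (eventually_lt_nhds (show (0:ℝ) < 1/2 by norm_num))] with y hy hy2
    have hyne : y ≠ 0 := hy
    rw [slope_def_field, Phi_nonpos le_rfl]
    rcases le_or_gt y 0 with h | h
    · rw [Phi_nonpos h]; simp
    · rw [Phi_left h hy2.le]
      have : |gg y| ≤ 4 * y ^ 2 := by
        unfold gg
        rw [abs_mul]
        have h1 : |Real.sin (Real.pi / (4 * y ^ 2))| ≤ 1 := Real.abs_sin_le_one _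
        have h2 : |4 * y ^ 2| = 4 * y ^ 2 := abs_of_nonneg (by positivity)
        nlinarith [abs_nonneg (Real.sin (Real.pi / (4 * y ^ 2)))]
      have hy0 : |y| > 0 := abs_pos.2 hyne
      calc ‖(gg y - 0) / (y - 0)‖ = |gg y| / |y| := by
            simp [Real.norm_eq_abs, abs_div]
        _ ≤ (4 * y ^ 2) / |y| := by gcongr
        _ = 4 * |y| := by
              rw [abs_of_pos h]; field_simp
  · have : Continuous fun y : ℝ => 4 * |y| := by continuity
    have := this.tendsto' 0 0 (by simp)
    exact this.mono_left nhdsWithin_le_nhds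

lemma hasDerivAt_Phi_one : HasDerivAt Phi 0 1 := by
  rw [hasDerivAt_iff_tendsto_slope]
  apply squeeze_zero_norm' (a := fun y => 4 * |y - 1|)
  · filter_upwards [self_mem_nhdsWithin,
      eventually_nhdsWithin_of_eventually_nhds
        (eventually_gt_nhds (show (1/2 : ℝ) < 1 by norm_num))] with y hy hy2
    have hyne : y - 1 ≠ 0 := sub_ne_zero.2 hy
    rw [slope_def_field, Phi_ge_one le_rfl]
    rcases le_or_gt 1 y with h | h
    · rw [Phi_ge_one h]; simp
    · rw [Phi_right hy2 h]
      have hb : |(-gg (1 - y))| ≤ 4 * (y - 1) ^ 2 := by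
        rw [abs_neg]
        unfold gg
        rw [abs_mul]
        have h1 : |Real.sin (Real.pi / (4 * (1 - y) ^ 2))| ≤ 1 := Real.abs_sin_le_one _
        have h2 : |4 * (1 - y) ^ 2| = 4 * (y - 1) ^ 2 := by
          rw [abs_of_nonneg (by positivity)]; ring
        nlinarith [abs_nonneg (Real.sin (Real.pi / (4 * (1 - y) ^ 2)))]
      have hy0 : |y - 1| > 0 := abs_pos.2 hyne
      calc ‖(-gg (1 - y) - 0) / (y - 1)‖ = |(-gg (1 - y))| / |y - 1| := by
            simp [Real.norm_eq_abs, abs_div]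
        _ ≤ (4 * (y - 1) ^ 2) / |y - 1| := by gcongr
        _ = 4 * |y - 1| := by
              field_simp [hy0.ne']
              rw [sq_abs]
  · have : Continuous fun y : ℝ => 4 * |y - 1| := by continuity
    have := this.tendsto' 1 0 (by simp)
    exact this.mono_left nhdsWithin_le_nhds

lemma hasDerivAt_Phi_half : HasDerivAt Phi (4 * Real.pi) (1/2) := by
  have hg12 : HasDerivAt gg (4 * Real.pi) (1/2) := Dg_half ▸ hasDerivAt_gg (by norm_num)
  have hleft : HasDerivWithinAt Phi (4 * Real.pi) (Iic (1/2)) (1/2) := by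
    refine hg12.hasDerivWithinAt.congr_of_eventuallyEq ?_ ?_
    · filter_upwards [self_mem_nhdsWithin,
        eventually_nhdsWithin_of_eventually_nhds
          (eventually_gt_nhds (show (0:ℝ) < 1/2 by norm_num))] with y hy hy0
      exact Phi_left hy0 hy
    · exact Phi_left (by norm_num) le_rfl
  have hh12 : HasDerivAt hh (4 * Real.pi) (1/2) := by
    have h1 := hasDerivAt_hh (show (1/2 : ℝ) ≠ 1 by norm_num)
    have h2 : Dg (1 - 1/2) = 4 * Real.pi := by
      rw [show (1:ℝ) - 1/2 = 1/2 by norm_num, Dg_half]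
    rwa [h2] at h1
  have hright : HasDerivWithinAt Phi (4 * Real.pi) (Ici (1/2)) (1/2) := by
    refine hh12.hasDerivWithinAt.congr_of_eventuallyEq ?_ ?_
    · filter_upwards [self_mem_nhdsWithin,
        eventually_nhdsWithin_of_eventually_nhds
          (eventually_lt_nhds (show (1/2:ℝ) < 1 by norm_num))] with y hy hy1
      rcases eq_or_lt_of_le (mem_Ici.1 hy) with h | h
      · rw [← h, Phi_left (by norm_num) le_rfl]
        unfold hh
        rw [show (1:ℝ) - 1/2 = 1/2 by norm_num, gg_half]
        simp
      · exact Phi_right h hy1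
    · rw [Phi_left (by norm_num) le_rfl]
      unfold hh
      rw [show (1:ℝ) - 1/2 = 1/2 by norm_num, gg_half]
      simp
  have := hleft.union hright
  rw [Iic_union_Ici, hasDerivWithinAt_univ] at this
  exact this

lemma differentiable_Phi : Differentiable ℝ Phi := by
  intro x
  rcases lt_trichotomy x 0 with h | h | h
  · refine (differentiableAt_const (0:ℝ)).congr_of_eventuallyEq ?_
    filter_upwards [eventually_lt_nhds h] with y hy
    exact Phi_nonpos hy.le
  · exact h ▸ hasDerivAt_Phi_zero.differentiableAt
  rcases lt_trichotomy x (1/2) with h2 | h2 | h2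
  · refine (hasDerivAt_gg (ne_of_gt h)).differentiableAt.congr_of_eventuallyEq ?_
    have : Ioo (0:ℝ) (1/2) ∈ 𝓝 x := Ioo_mem_nhds h h2
    filter_upwards [this] with y hy
    exact Phi_left hy.1 hy.2.le
  · exact h2 ▸ hasDerivAt_Phi_half.differentiableAt
  rcases lt_trichotomy x 1 with h3 | h3 | h3
  · refine (hasDerivAt_hh (ne_of_lt h3)).differentiableAt.congr_of_eventuallyEq ?_
    have : Ioo (1/2:ℝ) 1 ∈ 𝓝 x := Ioo_mem_nhds h2 h3
    filter_upwards [this] with y hy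
    exact Phi_right hy.1 hy.2
  · exact h3 ▸ hasDerivAt_Phi_one.differentiableAt
  · refine (differentiableAt_const (0:ℝ)).congr_of_eventuallyEq ?_
    filter_upwards [eventually_gt_nhds h3] with y hy
    exact Phi_ge_one hy.le

noncomputable def PhiIk (k : ℕ) (x : ℝ) : ℝ :=
  if ((2 : ℝ) ^ (k + 1))⁻¹ ≤ x then
    if x ≤ ((2 : ℝ) ^ k)⁻¹ then Phi (2 ^ (k + 1) * x - 1) else 0
  else 0

lemma PhiIk_eq (k : ℕ) (x : ℝ) : PhiIk k x = Phi (2 ^ (k + 1) * x - 1) := by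
  have hp : (0:ℝ) < 2 ^ (k + 1) := by positivity
  have hpk : (0:ℝ) < 2 ^ k := by positivity
  unfold PhiIk
  by_cases h1 : ((2 : ℝ) ^ (k + 1))⁻¹ ≤ x
  · rw [if_pos h1]
    by_cases h2 : x ≤ ((2 : ℝ) ^ k)⁻¹
    · rw [if_pos h2]
    · rw [if_neg h2]
      have hx : ((2 : ℝ) ^ k)⁻¹ < x := not_le.1 h2
      have : (2:ℝ) ≤ 2 ^ (k + 1) * x := by
        have := (mul_lt_mul_of_pos_left hx hp).le
        calc (2:ℝ) = 2 ^ (k+1) * ((2:ℝ)^k)⁻¹ := by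
              rw [pow_succ]; field_simp
          _ ≤ 2 ^ (k + 1) * x := this
      rw [Phi_ge_one (by linarith)]
  · rw [if_neg h1]
    have hx : x < ((2 : ℝ) ^ (k+1))⁻¹ := not_le.1 h1
    have : 2 ^ (k + 1) * x < 1 := by
      have := mul_lt_mul_of_pos_left hx hp
      rwa [mul_inv_cancel₀ hp.ne'] at this
    rw [Phi_nonpos (by linarith)]

lemma differentiable_PhiIk (k : ℕ) : Differentiable ℝ (PhiIk k) := by
  have : PhiIk k = fun x => Phi (2 ^ (k + 1) * x - 1) := funext (PhiIk_eq k)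
  rw [this]
  exact differentiable_Phi.comp ((differentiable_id.const_mul _).sub_const 1)

lemma Phi_pos_of_ne_zero {t : ℝ} (h : Phi t ≠ 0) : 0 < t ∧ t < 1 := by
  constructor
  · by_contra hc; exact h (Phi_nonpos (not_lt.1 hc))
  · by_contra hc; exact h (Phi_ge_one (not_lt.1 hc))

lemma PhiIk_mem_of_ne_zero {k : ℕ} {x : ℝ} (h : PhiIk k x ≠ 0) :
    ((2 : ℝ) ^ (k + 1))⁻¹ < x ∧ x < ((2 : ℝ) ^ k)⁻¹ := by
  have hp : (0:ℝ) < 2 ^ (k + 1) := by positivity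
  have hpk : (0:ℝ) < 2 ^ k := by positivity
  rw [PhiIk_eq] at h
  obtain ⟨h0, h1⟩ := Phi_pos_of_ne_zero h
  constructor
  · have h2 : 1 < 2 ^ (k + 1) * x := by linarith
    calc ((2 : ℝ) ^ (k + 1))⁻¹ = ((2 : ℝ) ^ (k + 1))⁻¹ * 1 := by ring
      _ < ((2 : ℝ) ^ (k + 1))⁻¹ * (2 ^ (k + 1) * x) := by
          exact mul_lt_mul_of_pos_left h2 (by positivity)
      _ = x := by field_simp
  · have h2 : 2 ^ (k + 1) * x < 2 := by linarith
    calc x = ((2 : ℝ) ^ (k + 1))⁻¹ * (2 ^ (k + 1) * x) := by field_simp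
      _ < ((2 : ℝ) ^ (k + 1))⁻¹ * 2 := mul_lt_mul_of_pos_left h2 (by positivity)
      _ = ((2 : ℝ) ^ k)⁻¹ := by rw [pow_succ]; field_simp

lemma PhiIk_zero_of_lt {k : ℕ} {x : ℝ} (h : x < ((2 : ℝ) ^ (k + 1))⁻¹) : PhiIk k x = 0 := by
  unfold PhiIk; rw [if_neg (not_le.2 h)]

lemma PhiIk_zero_of_gt {k : ℕ} {x : ℝ} (h : ((2 : ℝ) ^ k)⁻¹ < x) : PhiIk k x = 0 := by
  unfold PhiIk
  by_cases h1 : ((2 : ℝ) ^ (k + 1))⁻¹ ≤ x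
  · rw [if_pos h1, if_neg (not_le.2 h)]
  · rw [if_neg h1]

lemma two_pow_inv_mono {a b : ℕ} (h : a ≤ b) : ((2:ℝ) ^ b)⁻¹ ≤ ((2:ℝ) ^ a)⁻¹ := by
  have := pow_le_pow_right₀ (one_le_two (α := ℝ)) h
  exact inv_anti₀ (by positivity) this

lemma PhiIk_eq_zero_of_ne {k j : ℕ} {x : ℝ} (hkj : k ≠ j) (h : PhiIk k x ≠ 0) :
    PhiIk j x = 0 := by
  obtain ⟨h1, h2⟩ := PhiIk_mem_of_ne_zero h
  rcases lt_or_gt_of_ne hkj with hlt | hlt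
  · -- k < j so 2^{-j} ≤ 2^{-(k+1)} < x
    exact PhiIk_zero_of_gt (lt_of_le_of_lt (two_pow_inv_mono hlt) h1)
  · -- j < k so x < 2^{-k} ≤ 2^{-(j+1)}
    exact PhiIk_zero_of_lt (lt_of_lt_of_le h2 (two_pow_inv_mono hlt))

noncomputable def t0 : ℝ := (Real.sqrt 6)⁻¹

lemma t0_pos : 0 < t0 := by
  unfold t0
  have : (0:ℝ) < Real.sqrt 6 := Real.sqrt_pos.2 (by norm_num)
  positivity

lemma t0_lt_half : t0 < 1/2 := by
  unfold t0
  have h2 : (2:ℝ) < Real.sqrt 6 := by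
    have : Real.sqrt 4 < Real.sqrt 6 := by
      apply Real.sqrt_lt_sqrt <;> norm_num
    rwa [show (4:ℝ) = 2^2 by norm_num, Real.sqrt_sq (by norm_num : (0:ℝ) ≤ 2)] at this
  rw [show (1:ℝ)/2 = (2:ℝ)⁻¹ by norm_num]
  exact inv_strictAnti₀ (by norm_num) h2

lemma t0_sq : t0 ^ 2 = 1/6 := by
  unfold t0
  rw [inv_pow, Real.sq_sqrt (by norm_num : (6:ℝ) ≥ 0)]; norm_num

lemma Phi_t0 : Phi t0 = -(2/3) := by
  rw [Phi_left t0_pos t0_lt_half.le]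
  unfold gg
  rw [t0_sq]
  have h1 : Real.pi / (4 * (1/6 : ℝ)) = Real.pi + Real.pi / 2 := by ring
  rw [h1, Real.sin_add, Real.sin_pi, Real.cos_pi, Real.sin_pi_div_two]
  ring

noncomputable def xk (k : ℕ) : ℝ := (1 + t0) / 2 ^ (k + 1)

lemma xk_mem (k : ℕ) : xk k ∈ Icc (0:ℝ) 1 := by
  have hp : (2:ℝ) ≤ 2 ^ (k + 1) := by
    calc (2:ℝ) = 2 ^ 1 := by norm_num
      _ ≤ 2 ^ (k + 1) := pow_le_pow_right₀ one_le_two (by omega)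
  have ht := t0_pos
  have ht' := t0_lt_half
  constructor
  · unfold xk; positivity
  · unfold xk
    rw [div_le_one (by positivity)]
    linarith

lemma xk_key (k : ℕ) : 2 ^ (k + 1) * xk k - 1 = t0 := by
  unfold xk
  have hp : (0:ℝ) < 2 ^ (k + 1) := by positivity
  field_simp
  ring

lemma PhiIk_xk (k : ℕ) : PhiIk k (xk k) = -(2/3) := by
  rw [PhiIk_eq, xk_key, Phi_t0]

lemma xk_tendsto : Tendsto xk atTop (𝓝 0) := by
  have h1 : Tendsto (fun k : ℕ => ((2:ℝ)⁻¹) ^ (k + 1)) atTop (𝓝 0) := by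
    have := tendsto_pow_atTop_nhds_zero_of_lt_one
      (by norm_num : (0:ℝ) ≤ 2⁻¹) (by norm_num : (2:ℝ)⁻¹ < 1)
    exact this.comp (tendsto_add_atTop_nat 1)
  have h2 : Tendsto (fun k : ℕ => (1 + t0) * ((2:ℝ)⁻¹) ^ (k + 1)) atTop (𝓝 0) := by
    simpa using h1.const_mul (1 + t0)
  have : xk = fun k : ℕ => (1 + t0) * ((2:ℝ)⁻¹) ^ (k + 1) := by
    funext k; unfold xk; rw [inv_pow]; ring
  rwa [this]

/-- If `F` is a uniform limit on `[0,1]` of finite linear combinations of the `Φ_{I_k}`,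
then `F = Σ_k α_k Φ_{I_k}` pointwise on `[0,1]` for some null sequence `(α_k)`, `F` is
continuous on `[0,1]` and differentiable at every point of `(0,1]` (within `[0,1]`). -/
theorem stmt17 (F : ℝ → ℝ)
    (hF : ∃ (c : ℕ → ℕ → ℝ) (s : ℕ → Finset ℕ),
      TendstoUniformlyOn (fun n x => ∑ k ∈ s n, c n k * PhiIk k x) F
        Filter.atTop (Set.Icc 0 1)) :
    ∃ α : ℕ → ℝ, Filter.Tendsto α Filter.atTop (𝓝 0) ∧
      (∀ x ∈ Set.Icc (0 : ℝ) 1, F x = ∑' k : ℕ, α k * PhiIk k x) ∧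
      ContinuousOn F (Set.Icc 0 1) ∧
      (∀ x ∈ Set.Ioc (0 : ℝ) 1, DifferentiableWithinAt ℝ F (Set.Icc 0 1) x) := by
  obtain ⟨c, s, hU⟩ := hF
  have hFcont : ContinuousOn F (Icc 0 1) := by
    refine hU.continuousOn (Frequently.of_forall fun n => ?_)
    exact (continuous_finset_sum _ fun k _ =>
      (continuous_const.mul (differentiable_PhiIk k).continuous)).continuousOn
  -- the sums at points where exactly one PhiIk is nonzero
  have hsum : ∀ (x : ℝ) (k : ℕ), PhiIk k x ≠ 0 → ∀ n,
      (∑ j ∈ s n, c n j * PhiIk j x) = (if k ∈ s n then c n k else 0) * PhiIk k x := by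
    intro x k hk n
    by_cases hmem : k ∈ s n
    · rw [if_pos hmem]
      refine Finset.sum_eq_single k (fun j _ hj => ?_) (fun h => absurd hmem h)
      rw [PhiIk_eq_zero_of_ne (Ne.symm hj) hk, mul_zero]
    · rw [if_neg hmem, zero_mul]
      refine Finset.sum_eq_zero fun j hj => ?_
      have hjk : k ≠ j := fun h => hmem (h ▸ hj)
      rw [PhiIk_eq_zero_of_ne hjk hk, mul_zero]
  set α : ℕ → ℝ := fun k => F (xk k) / (-(2/3)) with hα
  have hcoef : ∀ k, Tendsto (fun n => if k ∈ s n then c n k else 0) atTop (𝓝 (α k)) := by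
    intro k
    have hpt := hU.tendsto_at (xk_mem k)
    have hne : PhiIk k (xk k) ≠ 0 := by rw [PhiIk_xk]; norm_num
    have heq : (fun n => ∑ j ∈ s n, c n j * PhiIk j (xk k)) =
        fun n => (if k ∈ s n then c n k else 0) * (-(2/3)) := by
      funext n; rw [hsum (xk k) k hne n, PhiIk_xk]
    rw [heq] at hpt
    have := hpt.div_const (-(2/3))
    simp only [mul_div_cancel_right₀ _ (by norm_num : (-(2/3):ℝ) ≠ 0)] at this
    exact this
  have hform : ∀ x ∈ Icc (0:ℝ) 1, F x = ∑' k : ℕ, α k * PhiIk k x := by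
    intro x hx
    by_cases hex : ∃ k, PhiIk k x ≠ 0
    · obtain ⟨k, hk⟩ := hex
      have htsum : ∑' j : ℕ, α j * PhiIk j x = α k * PhiIk k x :=
        tsum_eq_single k fun j hj => by
          rw [PhiIk_eq_zero_of_ne (Ne.symm hj) hk, mul_zero]
      rw [htsum]
      have hpt := hU.tendsto_at hx
      have heq : (fun n => ∑ j ∈ s n, c n j * PhiIk j x) =
          fun n => (if k ∈ s n then c n k else 0) * PhiIk k x := by
        funext n; exact hsum x k hk n
      rw [heq] at hpt
      exact tendsto_nhds_unique hpt ((hcoef k).mul_const (PhiIk k x))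
    · push_neg at hex
      have hz : ∀ n, (∑ j ∈ s n, c n j * PhiIk j x) = 0 := fun n =>
        Finset.sum_eq_zero fun j _ => by rw [hex j, mul_zero]
      have hpt := hU.tendsto_at hx
      have heq : (fun n => ∑ j ∈ s n, c n j * PhiIk j x) = fun _ => (0:ℝ) := funext hz
      rw [heq] at hpt
      have hF0 : F x = 0 := tendsto_nhds_unique hpt tendsto_const_nhds
      have : (fun j : ℕ => α j * PhiIk j x) = fun _ => (0:ℝ) := by
        funext j; rw [hex j, mul_zero]
      rw [hF0, this, tsum_zero]
  have hF0 : F 0 = 0 := by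
    rw [hform 0 (by norm_num)]
    have : (fun j : ℕ => α j * PhiIk j 0) = fun _ => (0:ℝ) := by
      funext j
      rw [PhiIk_zero_of_lt (by positivity), mul_zero]
    rw [this, tsum_zero]
  have hαt : Tendsto α atTop (𝓝 0) := by
    have h1 : Tendsto xk atTop (𝓝[Icc (0:ℝ) 1] 0) :=
      tendsto_nhdsWithin_of_tendsto_nhds_of_eventually_within _ xk_tendsto
        (Eventually.of_forall xk_mem)
    have h2 : Tendsto (fun k => F (xk k)) atTop (𝓝 0) := by
      have := (hFcont 0 (by norm_num)).tendsto.comp h1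
      rwa [hF0] at this
    have := h2.div_const (-(2/3))
    simpa using this
  refine ⟨α, hαt, hform, hFcont, ?_⟩
  intro x hx
  obtain ⟨N, hN⟩ : ∃ N : ℕ, ((2:ℝ) ^ (N + 1))⁻¹ < x := by
    obtain ⟨N, hN⟩ := exists_pow_lt_of_lt_one hx.1 (by norm_num : (1/2:ℝ) < 1)
    refine ⟨N, lt_of_le_of_lt ?_ hN⟩
    calc ((2:ℝ) ^ (N + 1))⁻¹ ≤ ((2:ℝ) ^ N)⁻¹ := two_pow_inv_mono (Nat.le_succ N)
      _ = (1/2:ℝ) ^ N := by rw [one_div, inv_pow]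
  set g : ℝ → ℝ := fun y => ∑ k ∈ Finset.range (N + 1), α k * PhiIk k y with hg
  have hdg : Differentiable ℝ g :=
    Differentiable.fun_sum fun k _ => (differentiable_PhiIk k).const_mul _
  have heqFg : ∀ y ∈ Icc (0:ℝ) 1 ∩ Ioi ((2:ℝ) ^ (N + 1))⁻¹, F y = g y := by
    intro y hy
    rw [hform y hy.1, hg]
    refine tsum_eq_sum fun k hk => ?_
    have hkN : N + 1 ≤ k := by
      by_contra h; exact hk (Finset.mem_range.2 (by omega))
    have : ((2:ℝ) ^ k)⁻¹ < y := lt_of_le_of_lt (two_pow_inv_mono hkN) hy.2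
    rw [PhiIk_zero_of_gt this, mul_zero]
  have hxmem : x ∈ Icc (0:ℝ) 1 := ⟨hx.1.le, hx.2⟩
  refine ((hdg x).differentiableWithinAt).congr_of_eventuallyEq ?_
    (heqFg x ⟨hxmem, hN⟩)
  filter_upwards [self_mem_nhdsWithin,
    eventually_nhdsWithin_of_eventually_nhds (eventually_gt_nhds hN)] with y hy1 hy2
  exact heqFg y ⟨hy1, hy2⟩
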